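/- arXiv:2604.21947 — 3 statements merged into one kernel-verified Lean document; each statement's English description precedes it below -/
import Mathlib

section
/- With C(z) := lim_{k→∞} [ Σ_{j=1}^{k} ln(z+j) − (z + k + 1/2)·ln(z+k) + (z+k) ], the function Γ̃(z+1) := exp(C(0) − C(z)) equals the classical Gamma function: Γ̃(z+1) = Γ(z+1) for all z ∈ ℂ with z ∉ ℤ_{<0}. -/
/-!
Exponentiating the difference of the two Stirling sequences gives, up to a correction factor,
Euler's product `GammaSeq (z + 1) k = k ^ (z + 1) k! / ((z + 1) ⋯ (z + k + 1))`, which tends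
to `Γ(z + 1)`. The correction is `(1 + (z + 1) / k) · exp ((z + k + 1/2) log (1 + z / k) - z)`,
and it tends to `1` because `k log (1 + z / k) → z`.
-/

open Filter Real

/-- The Cesàro/Stirling sequence whose limit defines `C(z)`. -/
noncomputable def stirlingSeq' (z : ℂ) (k : ℕ) : ℂ :=
  (∑ j ∈ Finset.Icc 1 k, Complex.log (z + j)) -
    (z + k + 1 / 2) * Complex.log (z + k) + (z + k)

open Finset Topology
open scoped Nat

theorem Finset.prod_Icc_one_eq_prod_range {M : Type*} [CommMonoid M] (f : ℕ → M) (k : ℕ) :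
    ∏ j ∈ Icc 1 k, f j = ∏ j ∈ range k, f (j + 1) := by
  rw [range_eq_Ico, prod_Ico_add' f, ← Ico_add_one_right_eq_Icc, zero_add]

namespace Complex

theorem prod_Icc_one_natCast_eq_factorial (k : ℕ) : ∏ j ∈ Icc 1 k, (j : ℂ) = k ! := by
  rw [prod_Icc_one_eq_prod_range, ← prod_range_add_one_eq_factorial]
  push_cast
  rfl

theorem exp_sum_log_natCast_sub_log_add {z : ℂ} {k : ℕ} (hz : ∀ j ∈ Icc 1 k, z + j ≠ 0) :
    exp (∑ j ∈ Icc 1 k, (log (j : ℂ) - log (z + j))) = k ! / ∏ j ∈ Icc 1 k, (z + j) := by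
  rw [exp_sum, ← prod_Icc_one_natCast_eq_factorial, ← prod_div_distrib]
  refine prod_congr rfl fun j hj => ?_
  have hj0 : (j : ℂ) ≠ 0 := Nat.cast_ne_zero.mpr (by grind)
  rw [exp_sub, exp_log hj0, exp_log (hz j hj)]

theorem GammaSeq_add_one_eq_div_prod_Icc (z : ℂ) (k : ℕ) :
    GammaSeq (z + 1) k =
      (k : ℂ) ^ (z + 1) * k ! / ((∏ j ∈ Icc 1 k, (z + j)) * (z + k + 1)) := by
  rw [GammaSeq, prod_range_succ, prod_Icc_one_eq_prod_range]
  congr 2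
  · refine prod_congr rfl fun j _ => ?_
    push_cast
    ring
  · ring

theorem log_add_natCast_sub_log {z : ℂ} {k : ℕ} (hk : k ≠ 0) (hzk : z + k ≠ 0) :
    log (z + k) - log (k : ℂ) = log (1 + z / k) := by
  have hk0 : (k : ℂ) ≠ 0 := Nat.cast_ne_zero.mpr hk
  have hfactor : z + k = ((k : ℝ) : ℂ) * (1 + z / k) := by
    push_cast
    field_simp
    ring
  have hne : 1 + z / k ≠ 0 := by
    intro h
    exact hzk (by rw [hfactor, h, mul_zero])
  rw [hfactor, log_ofReal_mul (Nat.cast_pos.mpr (Nat.pos_of_ne_zero hk)) hne, natCast_log]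
  ring

noncomputable def stirlingCorrection (z : ℂ) (k : ℕ) : ℂ :=
  (1 + (z + 1) / k) * exp ((z + k + 1 / 2) * log (1 + z / k) - z)

theorem tendsto_stirlingCorrection (z : ℂ) : Tendsto (stirlingCorrection z) atTop (𝓝 1) := by
  have hlog : Tendsto (fun k : ℕ => log (1 + z / k)) atTop (𝓝 0) := by
    simpa [Function.comp_def] using (continuousAt_clog (by simp)).tendsto.comp
      ((tendsto_const_div_atTop_nhds_zero_nat z).const_add 1)
  have hmul_log : Tendsto (fun k : ℕ => k * log (1 + z / k)) atTop (𝓝 z) := by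
    refine tendsto_nat_mul_log_one_add_of_tendsto (tendsto_const_nhds.congr' ?_)
    filter_upwards [eventually_ne_atTop 0] with k hk
    exact (mul_div_cancel₀ z (Nat.cast_ne_zero.mpr hk)).symm
  have hexponent :
      Tendsto (fun k : ℕ => (z + k + 1 / 2) * log (1 + z / k) - z) atTop (𝓝 0) := by
    have := (hlog.const_mul (z + 1 / 2)).add (hmul_log.sub_const z)
    simp only [mul_zero, sub_self, add_zero] at this
    exact this.congr fun k => by ring
  have := ((tendsto_const_div_atTop_nhds_zero_nat (z + 1)).const_add 1).mul hexponent.cexp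
  rwa [add_zero, exp_zero, mul_one] at this

theorem exp_stirlingSeq'_zero_sub {z : ℂ} (hz : ∀ n : ℕ, z ≠ -((n : ℂ) + 1)) {k : ℕ}
    (hk : k ≠ 0) :
    exp (stirlingSeq' 0 k - stirlingSeq' z k) = GammaSeq (z + 1) k * stirlingCorrection z k := by
  have hzj : ∀ j : ℕ, j ≠ 0 → z + j ≠ 0 := fun j hj h => by
    obtain ⟨n, rfl⟩ := Nat.exists_eq_add_one_of_ne_zero hj
    exact hz n (by push_cast at h; linear_combination h)
  have hk0 : (k : ℂ) ≠ 0 := Nat.cast_ne_zero.mpr hk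
  have hzk1 : z + k + 1 ≠ 0 := by simpa [add_assoc] using hzj (k + 1) k.succ_ne_zero
  have hP : ∏ j ∈ Icc 1 k, (z + j) ≠ 0 :=
    prod_ne_zero_iff.mpr fun j hj => hzj j (by grind)
  have hsplit : stirlingSeq' 0 k - stirlingSeq' z k =
      ∑ j ∈ Icc 1 k, (log (j : ℂ) - log (z + j))
      + ((z + k + 1 / 2) * (log (z + k) - log (k : ℂ)) - z) + log (k : ℂ) * z := by
    simp only [stirlingSeq', zero_add, sum_sub_distrib]
    ring
  rw [hsplit, Complex.exp_add, Complex.exp_add, ← cpow_def_of_ne_zero hk0,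
    exp_sum_log_natCast_sub_log_add fun j hj => hzj j (by grind),
    log_add_natCast_sub_log hk (hzj k hk), stirlingCorrection, GammaSeq_add_one_eq_div_prod_Icc,
    cpow_add _ _ hk0, cpow_one]
  field_simp
  ring

end Complex

theorem stmt_12 (z : ℂ) (hz : ∀ n : ℕ, z ≠ -((n : ℂ) + 1))
    (Cz C0 : ℂ)
    (hCz : Tendsto (stirlingSeq' z) atTop (nhds Cz))
    (hC0 : Tendsto (stirlingSeq' 0) atTop (nhds C0)) :
    Complex.exp (C0 - Cz) = Complex.Gamma (z + 1) := by
  have hGamma : Tendsto (fun k => Complex.exp (stirlingSeq' 0 k - stirlingSeq' z k)) atTop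
      (𝓝 (Complex.Gamma (z + 1))) := by
    have := (Complex.GammaSeq_tendsto_Gamma (z + 1)).mul (Complex.tendsto_stirlingCorrection z)
    rw [mul_one] at this
    refine this.congr' ?_
    filter_upwards [eventually_ne_atTop 0] with k hk
    exact (Complex.exp_stirlingSeq'_zero_sub hz hk).symm
  exact tendsto_nhds_unique (hC0.sub hCz).cexp hGamma
end

section
/- For all z in the open unit disc of ℂ, ln Γ(z+1) = −γ·z + Σ_{n=2}^{∞} ((−1)^n/n)·ζ(n)·z^n, where the series converges for |z| < 1. -/
/-!
Expanding `w - log (1 + w) = ∑_{n ≥ 2} (-1)ⁿ wⁿ / n` at `w = z / k` gives a double series in `n`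
and `k ≥ 1` which converges absolutely for `‖z‖ < 1`, being dominated by `‖z‖ⁿ / k²`. Summing over
`k` first produces the coefficients `(-1)ⁿ ζ(n) / n`; summing over `n` first and exponentiating
produces the partial products of the Weierstrass product
`Γ(z + 1) = e^{-γ z} ∏_{k ≥ 1} e^{z/k} / (1 + z/k)`, which in turn is Euler's limit formula
`Γ(s) = lim N^s N! / (s (s + 1) ⋯ (s + N))` combined with `H_N - log N → γ`.
-/

open Filter Finset Topology
open scoped Nat

namespace Complex

lemma hasSum_sub_log_one_add {w : ℂ} (hw : ‖w‖ < 1) :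
    HasSum (fun n : ℕ => (-1) ^ (n + 2) / ((n : ℂ) + 2) * w ^ (n + 2)) (w - log (1 + w)) := by
  have h := ((hasSum_nat_add_iff' 2).mpr (hasSum_taylorSeries_log hw)).neg
  rw [show -(log (1 + w) - ∑ i ∈ range 2, (-1) ^ (i + 1) * w ^ i / (i : ℂ)) = w - log (1 + w) by
    simp [Finset.sum_range_succ]] at h
  exact h.congr_fun fun n => by push_cast; ring

lemma hasSum_one_div_nat_add_one_pow_riemannZeta {k : ℕ} (hk : 1 < k) :
    HasSum (fun n : ℕ => 1 / ((n : ℂ) + 1) ^ k) (riemannZeta k) := by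
  have hs : Summable (fun n : ℕ => 1 / (n : ℂ) ^ k) := by
    simpa [← cpow_natCast] using summable_one_div_nat_cpow.mpr (by simpa using hk : 1 < (k : ℂ).re)
  rw [zeta_nat_eq_tsum_of_gt_one hk]
  simpa [zero_pow (by omega : k ≠ 0)] using (hasSum_nat_add_iff' 1).mpr hs.hasSum

lemma norm_natCast_add_one (k : ℕ) : ‖(k : ℂ) + 1‖ = k + 1 := by
  exact_mod_cast norm_natCast (k + 1)

lemma summable_sub_log_one_add_double_series {z : ℂ} (hz : ‖z‖ < 1) :
    Summable (fun p : ℕ × ℕ =>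
      (-1) ^ (p.1 + 2) / ((p.1 : ℂ) + 2) * (z / ((p.2 : ℂ) + 1)) ^ (p.1 + 2)) := by
  refine Summable.of_norm_bounded
    (g := fun p : ℕ × ℕ => ‖z‖ ^ (p.1 + 2) * (1 / ((p.2 : ℝ) + 1) ^ 2)) ?_ fun ⟨n, k⟩ => ?_
  · refine Summable.mul_of_nonneg (f := fun n : ℕ => ‖z‖ ^ (n + 2))
      (g := fun k : ℕ => 1 / ((k : ℝ) + 1) ^ 2) ?_ ?_ (fun _ => by positivity)
      (fun _ => by positivity)
    · exact ((summable_geometric_of_lt_one (norm_nonneg z) hz).mul_left (‖z‖ ^ 2)).congr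
        fun n => by ring
    · exact_mod_cast (summable_nat_add_iff 1).mpr (Real.summable_one_div_nat_pow.mpr one_lt_two)
  · have hn : ‖(n : ℂ) + 2‖ = n + 2 := by exact_mod_cast norm_natCast (n + 2)
    calc ‖(-1) ^ (n + 2) / ((n : ℂ) + 2) * (z / ((k : ℂ) + 1)) ^ (n + 2)‖
        = ‖z‖ ^ (n + 2) / ((n + 2) * ((k : ℝ) + 1) ^ (n + 2)) := by
          simp only [norm_mul, norm_div, norm_pow, norm_neg, norm_one, one_pow, hn,
            norm_natCast_add_one, div_pow]
          field_simp
      _ ≤ ‖z‖ ^ (n + 2) / (1 * ((k : ℝ) + 1) ^ 2) := by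
          gcongr
          · linarith
          · simp
          · omega
      _ = ‖z‖ ^ (n + 2) * (1 / ((k : ℝ) + 1) ^ 2) := by ring

local notation "γ" => Real.eulerMascheroniConstant

noncomputable def weierstrassGammaProd (z : ℂ) (N : ℕ) : ℂ :=
  exp (-γ * z) * ∏ k ∈ range N, exp (z / (k + 1)) / (1 + z / (k + 1))

lemma exp_neg_mul_prod_exp_div_nat_add_one (z : ℂ) (N : ℕ) :
    exp (-γ * z) * ∏ k ∈ range N, exp (z / (k + 1)) = exp (z * ((harmonic N - γ : ℝ) : ℂ)) := by
  rw [← exp_sum, ← exp_add, harmonic]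
  push_cast
  rw [mul_sub, Finset.mul_sum]
  congr 1
  simp only [div_eq_mul_inv]
  ring

lemma prod_one_add_div_nat_add_one (z : ℂ) (N : ℕ) :
    ∏ k ∈ range N, (1 + z / (k + 1)) = (∏ k ∈ range N, (z + 1 + k)) / N ! := by
  rw [← prod_range_add_one_eq_factorial, Nat.cast_prod, ← prod_div_distrib]
  refine prod_congr rfl fun k _ => ?_
  push_cast
  field_simp
  ring

lemma weierstrassGammaProd_eq_GammaSeq_mul (z : ℂ) {N : ℕ} (hN : N ≠ 0) (hzN : z + 1 + N ≠ 0) :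
    weierstrassGammaProd z N = GammaSeq (z + 1) N *
      (exp (z * ((harmonic N - Real.log N - γ : ℝ) : ℂ)) * ((z + 1 + N) / N)) := by
  have hN' : (N : ℂ) ≠ 0 := Nat.cast_ne_zero.mpr hN
  have hcpow : (N : ℂ) ^ (z + 1) = exp (z * log N) * N := by
    rw [cpow_add _ _ hN', cpow_one, cpow_def_of_ne_zero hN', mul_comm z]
  rw [weierstrassGammaProd, prod_div_distrib, ← mul_div_assoc,
    exp_neg_mul_prod_exp_div_nat_add_one, prod_one_add_div_nat_add_one, GammaSeq,
    prod_range_succ, hcpow]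
  push_cast
  rw [show z * (harmonic N - log N - γ) = z * (harmonic N - γ) - z * log N by ring, exp_sub]
  field_simp

/-- At the poles `z = -1, -2, …` this holds through the junk values: `Gamma (z + 1) = 0`, and the
partial products vanish eventually because `x / 0 = 0`. -/
theorem tendsto_weierstrassGammaProd (z : ℂ) :
    Tendsto (weierstrassGammaProd z) atTop (𝓝 (Gamma (z + 1))) := by
  have hexp : Tendsto (fun N : ℕ => exp (z * ((harmonic N - Real.log N - γ : ℝ) : ℂ)))
      atTop (𝓝 1) := by
    have h := (Real.tendsto_harmonic_sub_log.sub_const γ).ofReal.const_mul z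
    simpa [Function.comp_def] using (continuous_exp.tendsto _).comp h
  have hquot : Tendsto (fun N : ℕ => (z + 1 + N) / N) atTop (𝓝 1) := by
    simpa [inv_div, add_comm] using (tendsto_natCast_div_add_atTop (z + 1)).inv₀ one_ne_zero
  have h := (GammaSeq_tendsto_Gamma (z + 1)).mul (hexp.mul hquot)
  rw [mul_one, mul_one] at h
  refine h.congr' ?_
  filter_upwards [eventually_ne_atTop 0,
    tendsto_natCast_atTop_atTop.eventually_gt_atTop ‖z + 1‖] with N hN hzN
  refine (weierstrassGammaProd_eq_GammaSeq_mul z hN fun h0 => hzN.ne' ?_).symm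
  rw [eq_neg_of_add_eq_zero_left h0, norm_neg, norm_natCast]

theorem exp_neg_mul_add_eq_Gamma {z S : ℂ}
    (hS : HasSum (fun k : ℕ => z / (k + 1) - log (1 + z / (k + 1))) S)
    (hne : ∀ k : ℕ, 1 + z / (k + 1) ≠ 0) :
    exp (-γ * z + S) = Gamma (z + 1) := by
  refine tendsto_nhds_unique ?_ (tendsto_weierstrassGammaProd z)
  refine ((continuous_exp.tendsto _).comp (tendsto_const_nhds.add hS.tendsto_sum_nat)).congr
    fun N => ?_
  simp only [Function.comp_apply, weierstrassGammaProd, exp_add, exp_sum, exp_sub, exp_log (hne _)]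

end Complex

open Complex in
theorem stmt_14 (z : ℂ) (hz : ‖z‖ < 1) :
    ∃ L : ℂ,
      HasSum (fun n : ℕ =>
        ((-1) ^ (n + 2) / ((n : ℂ) + 2)) * riemannZeta ((n : ℂ) + 2) * z ^ (n + 2)) L ∧
      Complex.exp (-(Real.eulerMascheroniConstant : ℂ) * z + L) = Complex.Gamma (z + 1) := by
  have hw (k : ℕ) : ‖z / ((k : ℂ) + 1)‖ < 1 := by
    rw [norm_div, norm_natCast_add_one, div_lt_one (by positivity)]
    linarith [k.cast_nonneg (α := ℝ)]
  obtain ⟨S, hS⟩ := summable_sub_log_one_add_double_series hz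
  refine ⟨S, hS.prod_fiberwise fun n => ?_, exp_neg_mul_add_eq_Gamma ?_ fun k h => ?_⟩
  · have h := ((hasSum_one_div_nat_add_one_pow_riemannZeta (k := n + 2) (by omega)).mul_left
      ((-1) ^ (n + 2) / ((n : ℂ) + 2))).mul_right (z ^ (n + 2))
    push_cast at h
    exact h.congr_fun fun k => by rw [mul_assoc, one_div_mul_eq_div, div_pow]
  · have hS' : HasSum (fun p : ℕ × ℕ =>
        (-1) ^ (p.2 + 2) / ((p.2 : ℂ) + 2) * (z / ((p.1 : ℂ) + 1)) ^ (p.2 + 2)) S :=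
      ((Equiv.prodComm ℕ ℕ).hasSum_iff.mpr hS).congr_fun fun _ => rfl
    have hlog_tail (k : ℕ) := hasSum_sub_log_one_add (hw k)
    exact hS'.prod_fiberwise hlog_tail
  · simpa [eq_neg_of_add_eq_zero_right h] using hw k
end

section
/- The Gauss multiplication formula: for every n ≥ 1 and every z ∈ ℂ with z+1, (z+1)/n, (z+2)/n, …, (z+n)/n all avoiding the non-positive integers, (2π)^{(n−1)/2} · Γ(z+1) = n^{z+1/2} · ∏_{l=1}^{n} Γ((z+l)/n). -/
/-!
Euler's limit `Γ(s) = lim m^s m! / (s (s+1) ⋯ (s+m))`, taken for `Γ(z+1)` at level `N = n(m+1) - 1`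
and for every `Γ((z+l)/n)` at level `m`, produces the same Pochhammer product `∏_{k ≤ N} (z+1+k)`
once `k` is written as `n j + (l - 1)`. Hence `n^{-z} Γ(z+1) / ∏_l Γ((z+l)/n)` does not depend on
`z`. Its value at `z = 0` follows from the reflection formula `Γ(x) Γ(1-x) = π / sin (π x)` and the
sine product `∏_{l<n} 2 sin (π l / n) = n`, the norm of `∏_{l<n} (1 - ζ^l)` for a primitive `n`-th
root of unity `ζ`.
-/

open Real Filter Topology Finset
open scoped Nat

theorem Finset.prod_range_mul_eq_prod_prod {M : Type*} [CommMonoid M] (f : ℕ → M) (n m : ℕ) :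
    ∏ k ∈ range (n * m), f k = ∏ j ∈ range m, ∏ i ∈ range n, f (n * j + i) := by
  induction m with
  | zero => simp
  | succ m ih => rw [Nat.mul_succ, prod_range_add, ih, prod_range_succ]

theorem Real.prod_two_mul_sin_pi_mul_div (k : ℕ) :
    ∏ i ∈ range k, 2 * sin (π * (i + 1) / (k + 1)) = k + 1 := by
  have hroot := Complex.isPrimitiveRoot_exp (k + 1) k.succ_ne_zero
  have hnorm := congrArg (‖·‖) hroot.prod_one_sub_pow_eq_order
  simp only [norm_prod] at hnorm
  rw [show ‖((k : ℂ) + 1)‖ = k + 1 by norm_cast] at hnorm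
  refine (prod_congr rfl fun i hi => ?_).trans hnorm
  have hpow : Complex.exp (2 * π * Complex.I / ((k + 1 : ℕ) : ℂ)) ^ (i + 1) =
      Complex.exp (Complex.I * ((2 * π * (i + 1) / (k + 1) : ℝ) : ℂ)) := by
    rw [← Complex.exp_nat_mul]
    congr 1
    push_cast
    ring
  have hsin : 0 ≤ sin (π * (i + 1) / (k + 1)) := by
    apply sin_nonneg_of_nonneg_of_le_pi (by positivity)
    rw [div_le_iff₀ (by positivity)]
    have : (i : ℝ) + 1 ≤ k := by exact_mod_cast mem_range.mp hi
    nlinarith [pi_pos]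
  rw [hpow, norm_sub_rev, Complex.norm_exp_I_mul_ofReal_sub_one,
    show 2 * π * (i + 1) / (k + 1) / 2 = π * (i + 1) / (k + 1) by ring,
    Real.norm_of_nonneg (by linarith)]

theorem Real.prod_Gamma_add_one_div {n : ℕ} (hn : n ≠ 0) :
    ∏ i ∈ range n, Gamma ((i + 1) / n) = (2 * π) ^ (((n : ℝ) - 1) / 2) / √n := by
  obtain ⟨k, rfl⟩ := Nat.exists_eq_succ_of_ne_zero hn
  push_cast
  rw [prod_range_succ, div_self (by positivity), Gamma_one, mul_one, add_sub_cancel_right]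
  set P := ∏ i ∈ range k, Gamma ((i + 1) / (k + 1))
  have hP : 0 < P := prod_pos fun i _ => Gamma_pos_of_pos (by positivity)
  have hreflect : ∏ i ∈ range k, Gamma (1 - (i + 1) / (k + 1)) = P := by
    rw [← prod_range_reflect]
    refine prod_congr rfl fun i hi => ?_
    have hik := mem_range.mp hi
    rw [Nat.cast_sub (by omega), Nat.cast_sub (by omega)]
    congr 1
    field_simp
    push_cast
    ring
  have hsq : P ^ 2 = (2 * π) ^ k / (k + 1) := by
    calc P ^ 2 = ∏ i ∈ range k, Gamma ((i + 1) / (k + 1)) * Gamma (1 - (i + 1) / (k + 1)) := by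
          rw [prod_mul_distrib, hreflect, sq]
      _ = ∏ i ∈ range k, 2 * π / (2 * sin (π * (i + 1) / (k + 1))) := by
          refine prod_congr rfl fun i _ => ?_
          rw [Gamma_mul_Gamma_one_sub, mul_div_mul_left _ _ two_ne_zero, mul_div_assoc]
      _ = (2 * π) ^ k / (k + 1) := by
          rw [prod_div_distrib, prod_const, card_range, prod_two_mul_sin_pi_mul_div]
  have hT : 0 < (2 * π) ^ ((k : ℝ) / 2) / √(k + 1) := by positivity
  refine (pow_left_inj₀ hP.le hT.le two_ne_zero).mp ?_
  rw [hsq, div_pow, sq_sqrt (by positivity), ← rpow_mul_natCast (by positivity), ← rpow_natCast]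
  norm_num

namespace Complex

variable {n : ℕ}

theorem cpow_sum {x : ℂ} (hx : x ≠ 0) {ι : Type*} (s : Finset ι) (f : ι → ℂ) :
    x ^ (∑ i ∈ s, f i) = ∏ i ∈ s, x ^ f i := by
  simp only [cpow_def_of_ne_zero hx, mul_sum, exp_sum]

theorem prod_prod_add_one_div_add (hn : n ≠ 0) (z : ℂ) (m : ℕ) :
    ∏ j ∈ range m, ∏ i ∈ range n, ((z + (i + 1)) / n + j) =
      (∏ k ∈ range (n * m), (z + 1 + k)) / (n : ℂ) ^ (n * m) := by
  have hn' : (n : ℂ) ≠ 0 := Nat.cast_ne_zero.mpr hn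
  rw [eq_div_iff (pow_ne_zero _ hn'), pow_mul, pow_eq_prod_const _ m,
    ← prod_mul_distrib, prod_range_mul_eq_prod_prod]
  refine prod_congr rfl fun j _ => ?_
  rw [pow_eq_prod_const _ n, ← prod_mul_distrib]
  refine prod_congr rfl fun i _ => ?_
  push_cast
  field_simp
  ring

theorem sum_range_add_one_div (hn : n ≠ 0) (z : ℂ) :
    ∑ i ∈ range n, (z + (i + 1)) / n = z + (n + 1) / 2 := by
  have hn' : (n : ℂ) ≠ 0 := Nat.cast_ne_zero.mpr hn
  have hgauss : ∀ k : ℕ, ∑ i ∈ range k, ((i : ℂ) + 1) = k * (k + 1) / 2 := by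
    intro k
    induction k with
    | zero => simp
    | succ k ih => rw [sum_range_succ, ih]; push_cast; ring
  rw [← sum_div, sum_add_distrib, sum_const, card_range, hgauss, nsmul_eq_mul]
  field_simp

theorem prod_GammaSeq_add_one_div (hn : n ≠ 0) (z : ℂ) {m : ℕ} (hm : m ≠ 0) :
    ∏ i ∈ range n, GammaSeq ((z + (i + 1)) / n) m =
      (m : ℂ) ^ (z + (n + 1) / 2) * (m ! : ℂ) ^ n * (n : ℂ) ^ (n * (m + 1)) /
        ∏ k ∈ range (n * (m + 1)), (z + 1 + k) := by
  have hm' : (m : ℂ) ≠ 0 := Nat.cast_ne_zero.mpr hm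
  simp only [GammaSeq]
  rw [prod_div_distrib, prod_mul_distrib, prod_const, card_range, ← cpow_sum hm',
    sum_range_add_one_div hn, Finset.prod_comm, prod_prod_add_one_div_add hn, div_div_eq_mul_div]

theorem cpow_mul_GammaSeq_mul_prod_GammaSeq_comm (hn : n ≠ 0) {m N : ℕ} (hm : m ≠ 0)
    (hN : N + 1 = n * (m + 1)) (z w : ℂ) :
    ((N : ℂ) / m) ^ w * GammaSeq (z + 1) N * ∏ i ∈ range n, GammaSeq ((w + (i + 1)) / n) m =
      ((N : ℂ) / m) ^ z * GammaSeq (w + 1) N * ∏ i ∈ range n, GammaSeq ((z + (i + 1)) / n) m := by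
  have hm' : (m : ℂ) ≠ 0 := Nat.cast_ne_zero.mpr hm
  have hN' : (N : ℂ) ≠ 0 := by
    have : m + 1 ≤ n * (m + 1) := Nat.le_mul_of_pos_left _ (Nat.pos_of_ne_zero hn)
    exact Nat.cast_ne_zero.mpr (by omega)
  have hclosed : ∀ z w : ℂ,
      ((N : ℂ) / m) ^ w * GammaSeq (z + 1) N * ∏ i ∈ range n, GammaSeq ((w + (i + 1)) / n) m =
        (N : ℂ) ^ (z + w + 1) * (m : ℂ) ^ (((n : ℂ) + 1) / 2) * N ! * (m ! : ℂ) ^ n *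
          (n : ℂ) ^ (n * (m + 1)) /
            ((∏ k ∈ range (n * (m + 1)), (z + 1 + k)) *
              ∏ k ∈ range (n * (m + 1)), (w + 1 + k)) := by
    intro z w
    have hdiv : ((N : ℂ) / m) ^ w = (N : ℂ) ^ w / (m : ℂ) ^ w := by
      simpa using div_cpow_ofReal_nonneg (Nat.cast_nonneg N) (Nat.cast_nonneg m) w
    rw [GammaSeq, prod_GammaSeq_add_one_div hn w hm, hN, hdiv, cpow_add _ _ hm',
      cpow_add _ _ hN', cpow_add _ _ hN', cpow_add _ _ hN']
    have hmw : (m : ℂ) ^ w ≠ 0 := cpow_ne_zero_iff.mpr (Or.inl hm')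
    field_simp
  rw [hclosed, hclosed, add_comm z w, mul_comm (∏ k ∈ range (n * (m + 1)), (z + 1 + k))]

-- Cross-multiplied so that it also holds at the poles, where `Gamma` takes the junk value `0`.
theorem cpow_mul_Gamma_add_one_mul_prod_Gamma_comm (hn : n ≠ 0) (z w : ℂ) :
    (n : ℂ) ^ w * Gamma (z + 1) * ∏ i ∈ range n, Gamma ((w + (i + 1)) / n) =
      (n : ℂ) ^ z * Gamma (w + 1) * ∏ i ∈ range n, Gamma ((z + (i + 1)) / n) := by
  set N : ℕ → ℕ := fun m => n * (m + 1) - 1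
  have hN1 (m : ℕ) : N m + 1 = n * (m + 1) :=
    Nat.sub_add_cancel (Nat.one_le_iff_ne_zero.mpr (by positivity))
  have hN : Tendsto N atTop atTop := by
    refine tendsto_atTop_mono (fun m => show m ≤ N m from ?_) tendsto_id
    have := Nat.le_mul_of_pos_left (m + 1) (Nat.pos_of_ne_zero hn)
    have := hN1 m
    omega
  have hratio : Tendsto (fun m => (N m : ℂ) / m) atTop (𝓝 n) := by
    have hlim := (tendsto_const_div_atTop_nhds_zero_nat ((n : ℂ) - 1)).const_add (n : ℂ)
    rw [add_zero] at hlim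
    refine hlim.congr' ?_
    filter_upwards [eventually_ne_atTop 0] with m hm
    have hNm : (N m : ℂ) = n * (m + 1) - 1 := by
      rw [eq_sub_iff_add_eq]; exact_mod_cast hN1 m
    rw [hNm]
    field_simp
    ring
  have hlim : ∀ z w : ℂ, Tendsto (fun m => ((N m : ℂ) / m) ^ w * GammaSeq (z + 1) (N m) *
      ∏ i ∈ range n, GammaSeq ((w + (i + 1)) / n) m) atTop
      (𝓝 ((n : ℂ) ^ w * Gamma (z + 1) * ∏ i ∈ range n, Gamma ((w + (i + 1)) / n))) := by
    intro z w
    exact (((continuousAt_cpow_const (natCast_mem_slitPlane.mpr hn)).tendsto.comp hratio).mul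
      ((GammaSeq_tendsto_Gamma _).comp hN)).mul
        (tendsto_finsetProd _ fun i _ => GammaSeq_tendsto_Gamma _)
  refine tendsto_nhds_unique ((hlim z w).congr' ?_) (hlim w z)
  filter_upwards [eventually_ne_atTop 0] with m hm
  exact cpow_mul_GammaSeq_mul_prod_GammaSeq_comm hn hm (hN1 m) z w

theorem prod_Gamma_add_one_div (hn : n ≠ 0) :
    ∏ i ∈ range n, Gamma ((i + 1) / n) =
      (2 * π) ^ (((n : ℂ) - 1) / 2) / (n : ℂ) ^ (1 / 2 : ℂ) := by
  have h := congrArg ((↑) : ℝ → ℂ) (Real.prod_Gamma_add_one_div hn)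
  rw [sqrt_eq_rpow] at h
  push_cast [← Gamma_ofReal, ofReal_cpow (by positivity : (0 : ℝ) ≤ 2 * π),
    ofReal_cpow (Nat.cast_nonneg n)] at h
  exact h

end Complex

theorem stmt_17_general (n : ℕ) (hn : 1 ≤ n) (z : ℂ) :
    (2 * (π : ℂ)) ^ (((n : ℂ) - 1) / 2) * Complex.Gamma (z + 1) =
      (n : ℂ) ^ (z + 1 / 2) * ∏ l ∈ Finset.Icc 1 n, Complex.Gamma ((z + l) / n) := by
  have hn0 : n ≠ 0 := Nat.one_le_iff_ne_zero.mp hn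
  have hn' : (n : ℂ) ≠ 0 := Nat.cast_ne_zero.mpr hn0
  have hIcc : ∏ l ∈ Icc 1 n, Complex.Gamma ((z + l) / n) =
      ∏ i ∈ range n, Complex.Gamma ((z + (i + 1)) / n) := by
    rw [← Finset.Ico_add_one_right_eq_Icc, prod_Ico_eq_prod_range]
    refine prod_congr rfl fun i _ => ?_
    congr 2
    push_cast
    ring
  have hcomm := Complex.cpow_mul_Gamma_add_one_mul_prod_Gamma_comm hn0 z 0
  simp only [Complex.cpow_zero, one_mul, zero_add, Complex.Gamma_one, mul_one] at hcomm
  rw [hIcc, Complex.cpow_add _ _ hn', mul_right_comm, ← hcomm,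
    Complex.prod_Gamma_add_one_div hn0]
  have : (n : ℂ) ^ (1 / 2 : ℂ) ≠ 0 := Complex.cpow_ne_zero_iff.mpr (Or.inl hn')
  field_simp

theorem stmt_17 (n : ℕ) (hn : 1 ≤ n) (z : ℂ)
    (h1 : ∀ m : ℕ, z + 1 ≠ -(m : ℂ))
    (h2 : ∀ l ∈ Finset.Icc 1 n, ∀ m : ℕ, (z + l) / n ≠ -(m : ℂ)) :
    (2 * (π : ℂ)) ^ (((n : ℂ) - 1) / 2) * Complex.Gamma (z + 1) =
      (n : ℂ) ^ (z + 1 / 2) * ∏ l ∈ Finset.Icc 1 n, Complex.Gamma ((z + l) / n) :=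
  stmt_17_general n hn z
end
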